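/- Let κ₁ ≥ 0, κ₂ > 0, d > 0, T_L > T_U, λ = √(κ₁/κ₂), and define T̄(z) = ((T_L - T_U)/2)·h_{d/2,λ}(z - d/2) + (T_L + T_U)/2, where h is the function from the paper. Then T̄ satisfies κ₁·T̄'' - κ₂·T̄'''' = 0 on [0,d], with T̄(0) = T_L, T̄(d) = T_U, and T̄'(0) = T̄'(d) = 0. -/

import Mathlib

noncomputable def hdl (d lam : ℝ) (x : ℝ) : ℝ :=
  if lam = 0 then (x ^ 3 - 3 * d ^ 2 * x) / (2 * d ^ 3)
  else -(lam * x * Real.cosh (lam * d) - Real.sinh (lam * x)) /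
    (lam * d * Real.cosh (lam * d) - Real.sinh (lam * d))

/-!
On either branch `h_{d,λ}` is `a sinh (λx) + b x` (resp. `a x³ + b x`), and the second derivative
maps this family into itself, sending `a` to `a λ²` (resp. to the linear part). Hence
`h'''' = λ² h''`, and with `κ₂ λ² = κ₁` the equation for `T̄` follows after the affine change of
variables. The boundary values come from evaluating at `x = ±d`; the denominator
`λd cosh (λd) - sinh (λd)` is nonzero because `t cosh t - sinh t` is odd and increasing.
-/

open Real

lemma sinh_lt_mul_cosh {t : ℝ} (ht : 0 < t) : sinh t < t * cosh t := by
  have hmono : StrictMonoOn (fun s : ℝ => s * cosh s - sinh s) (Set.Ici 0) := by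
    refine strictMonoOn_of_deriv_pos (convex_Ici 0) (by fun_prop) fun s hs => ?_
    rw [interior_Ici, Set.mem_Ioi] at hs
    have hderiv : HasDerivAt (fun s : ℝ => s * cosh s - sinh s) (s * sinh s) s :=
      (((hasDerivAt_id' s).mul (hasDerivAt_cosh s)).sub (hasDerivAt_sinh s)).congr_deriv (by ring)
    rw [hderiv.deriv]
    exact mul_pos hs (sinh_pos_iff.mpr hs)
  simpa using hmono Set.self_mem_Ici ht.le ht

lemma mul_cosh_sub_sinh_ne_zero {t : ℝ} (ht : t ≠ 0) : t * cosh t - sinh t ≠ 0 := by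
  rcases ht.lt_or_gt with hneg | hpos
  · have := sinh_lt_mul_cosh (neg_pos.mpr hneg)
    rw [sinh_neg, cosh_neg] at this
    linarith
  · linarith [sinh_lt_mul_cosh hpos]

lemma iteratedDeriv_four_eq (f : ℝ → ℝ) :
    iteratedDeriv 4 f = iteratedDeriv 2 (iteratedDeriv 2 f) := by
  simp only [iteratedDeriv_eq_iterate, ← Function.iterate_add_apply]

lemma iteratedDeriv_affine_comp_sub (f : ℝ → ℝ) (A B e : ℝ) {n : ℕ} (hn : 0 < n) (z : ℝ) :
    iteratedDeriv n (fun z => A * f (z - e) + B) z = A * iteratedDeriv n f (z - e) := by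
  simp only [add_comm _ B, iteratedDeriv_const_add hn, iteratedDeriv_const_mul_field,
    iteratedDeriv_comp_sub_const n f e]

-- The `0 * _` terms keep each result in the shape of its input, so that it can be iterated.
section
variable (a b m : ℝ)

lemma hasDerivAt_sinh_add_linear (x : ℝ) :
    HasDerivAt (fun x => a * sinh (m * x) + b * x) (a * m * cosh (m * x) + b) x :=
  ((((hasDerivAt_id' x).const_mul m).sinh.const_mul a).add
    ((hasDerivAt_id' x).const_mul b)).congr_deriv (by ring)

lemma iteratedDeriv_two_sinh_add_linear :
    iteratedDeriv 2 (fun x => a * sinh (m * x) + b * x) =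
      fun x => a * m ^ 2 * sinh (m * x) + 0 * x := by
  have h1 : deriv (fun x => a * sinh (m * x) + b * x) = fun x => a * m * cosh (m * x) + b :=
    funext fun x => (hasDerivAt_sinh_add_linear a b m x).deriv
  have h2 (x : ℝ) : HasDerivAt (fun x => a * m * cosh (m * x) + b)
      (a * m ^ 2 * sinh (m * x) + 0 * x) x :=
    ((((hasDerivAt_id' x).const_mul m).cosh.const_mul (a * m)).add_const b).congr_deriv (by ring)
  rw [iteratedDeriv_succ, iteratedDeriv_one, h1]
  exact funext fun x => (h2 x).deriv

lemma hasDerivAt_cube_add_linear (x : ℝ) :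
    HasDerivAt (fun x => a * x ^ 3 + b * x) (3 * a * x ^ 2 + b) x :=
  ((((hasDerivAt_id' x).pow 3).const_mul a).add ((hasDerivAt_id' x).const_mul b)).congr_deriv
    (by push_cast; ring)

lemma iteratedDeriv_two_cube_add_linear :
    iteratedDeriv 2 (fun x => a * x ^ 3 + b * x) = fun x => 0 * x ^ 3 + 6 * a * x := by
  have h1 : deriv (fun x => a * x ^ 3 + b * x) = fun x => 3 * a * x ^ 2 + b :=
    funext fun x => (hasDerivAt_cube_add_linear a b x).deriv
  have h2 (x : ℝ) : HasDerivAt (fun x => 3 * a * x ^ 2 + b) (0 * x ^ 3 + 6 * a * x) x :=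
    ((((hasDerivAt_id' x).pow 2).const_mul (3 * a)).add_const b).congr_deriv (by push_cast; ring)
  rw [iteratedDeriv_succ, iteratedDeriv_one, h1]
  exact funext fun x => (h2 x).deriv

end

section
variable {d lam : ℝ}

lemma hdl_of_ne_zero (hlam : lam ≠ 0) :
    hdl d lam = fun x => (lam * d * cosh (lam * d) - sinh (lam * d))⁻¹ * sinh (lam * x) +
      -(lam * cosh (lam * d)) / (lam * d * cosh (lam * d) - sinh (lam * d)) * x := by
  funext x
  simp only [hdl, if_neg hlam]
  ring

lemma hdl_zero : hdl d 0 = fun x => (2 * d ^ 3)⁻¹ * x ^ 3 + -(3 * d ^ 2) / (2 * d ^ 3) * x := by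
  funext x
  simp only [hdl, ↓reduceIte]
  ring

lemma iteratedDeriv_four_hdl (x : ℝ) :
    iteratedDeriv 4 (hdl d lam) x = lam ^ 2 * iteratedDeriv 2 (hdl d lam) x := by
  rw [iteratedDeriv_four_eq]
  rcases eq_or_ne lam 0 with rfl | hlam
  · rw [hdl_zero, iteratedDeriv_two_cube_add_linear, iteratedDeriv_two_cube_add_linear]
    ring
  · simp only [hdl_of_ne_zero hlam, iteratedDeriv_two_sinh_add_linear]
    ring

lemma hdl_neg_self (hd : d ≠ 0) : hdl d lam (-d) = 1 := by
  rcases eq_or_ne lam 0 with rfl | hlam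
  · simp only [hdl_zero]; field_simp; ring
  · have hD := mul_cosh_sub_sinh_ne_zero (mul_ne_zero hlam hd)
    simp only [hdl_of_ne_zero hlam, mul_neg, sinh_neg]
    field_simp; ring

lemma hdl_self (hd : d ≠ 0) : hdl d lam d = -1 := by
  rcases eq_or_ne lam 0 with rfl | hlam
  · simp only [hdl_zero]; field_simp; ring
  · have hD := mul_cosh_sub_sinh_ne_zero (mul_ne_zero hlam hd)
    simp only [hdl_of_ne_zero hlam]
    field_simp; ring

lemma deriv_hdl_neg_self (hd : d ≠ 0) : deriv (hdl d lam) (-d) = 0 := by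
  rcases eq_or_ne lam 0 with rfl | hlam
  · rw [hdl_zero, (hasDerivAt_cube_add_linear _ _ _).deriv]; field_simp; ring
  · have hD := mul_cosh_sub_sinh_ne_zero (mul_ne_zero hlam hd)
    rw [hdl_of_ne_zero hlam, (hasDerivAt_sinh_add_linear _ _ _ _).deriv, mul_neg, cosh_neg]
    field_simp; ring

lemma deriv_hdl_self (hd : d ≠ 0) : deriv (hdl d lam) d = 0 := by
  rcases eq_or_ne lam 0 with rfl | hlam
  · rw [hdl_zero, (hasDerivAt_cube_add_linear _ _ _).deriv]; field_simp; ring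
  · have hD := mul_cosh_sub_sinh_ne_zero (mul_ne_zero hlam hd)
    rw [hdl_of_ne_zero hlam, (hasDerivAt_sinh_add_linear _ _ _ _).deriv]
    field_simp; ring

end

theorem stmt_5_general (κ₁ κ₂ d TL TU : ℝ) (hκ₁ : 0 ≤ κ₁) (hκ₂ : 0 < κ₂) (hd : 0 < d)
    (lam : ℝ) (hlam : lam = Real.sqrt (κ₁ / κ₂))
    (Tbar : ℝ → ℝ)
    (hTbar : ∀ z, Tbar z = (TL - TU) / 2 * hdl (d / 2) lam (z - d / 2) + (TL + TU) / 2) :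
    (∀ z ∈ Set.Icc 0 d,
        κ₁ * iteratedDeriv 2 Tbar z - κ₂ * iteratedDeriv 4 Tbar z = 0) ∧
      Tbar 0 = TL ∧ Tbar d = TU ∧ deriv Tbar 0 = 0 ∧ deriv Tbar d = 0 := by
  have hκ : κ₂ * lam ^ 2 = κ₁ := by
    rw [hlam, sq_sqrt (div_nonneg hκ₁ hκ₂.le)]
    field_simp
  have hd2 : d / 2 ≠ 0 := by positivity
  have hleft : 0 - d / 2 = -(d / 2) := zero_sub _
  have hright : d - d / 2 = d / 2 := sub_half d
  obtain rfl : Tbar = fun z => (TL - TU) / 2 * hdl (d / 2) lam (z - d / 2) + (TL + TU) / 2 :=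
    funext hTbar
  simp only [← iteratedDeriv_one]
  simp only [iteratedDeriv_affine_comp_sub _ _ _ _ (Nat.succ_pos _), iteratedDeriv_one,
    iteratedDeriv_four_hdl, hleft, hright, hdl_neg_self hd2, hdl_self hd2,
    deriv_hdl_neg_self hd2, deriv_hdl_self hd2]
  refine ⟨fun z _ => by rw [← hκ]; ring, by ring, by ring, by ring, by ring⟩

theorem stmt_5 (κ₁ κ₂ d TL TU : ℝ) (hκ₁ : 0 ≤ κ₁) (hκ₂ : 0 < κ₂) (hd : 0 < d)
    (hT : TU < TL)
    (lam : ℝ) (hlam : lam = Real.sqrt (κ₁ / κ₂))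
    (Tbar : ℝ → ℝ)
    (hTbar : ∀ z, Tbar z = (TL - TU) / 2 * hdl (d / 2) lam (z - d / 2) + (TL + TU) / 2) :
    (∀ z ∈ Set.Icc 0 d,
        κ₁ * iteratedDeriv 2 Tbar z - κ₂ * iteratedDeriv 4 Tbar z = 0) ∧
      Tbar 0 = TL ∧ Tbar d = TU ∧ deriv Tbar 0 = 0 ∧ deriv Tbar d = 0 :=
  stmt_5_general κ₁ κ₂ d TL TU hκ₁ hκ₂ hd lam hlam Tbar hTbar
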